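/- arXiv:1704.05557 — 2 statements merged into one kernel-verified Lean document; each statement's English description precedes it below -/
import Mathlib

section
/- Define c_{ℓ,m} for integers ℓ, m ≥ 0 by the recursion c_{ℓ,m} = (m+1)·Cat(ℓ+m+1) − ∑_{i=0}^{m} ( ∑_{j=1}^{i} Cat(j−1)·Cat(ℓ+m+1−j) + ∑_{j=1}^{m−i} Cat(ℓ+m+1−j)·Cat(j−1) ). Then c_{ℓ,m} = C(2(ℓ+1), ℓ+1)·C(2(m+1), m+1)·(ℓ+1)(m+1)/(2(ℓ+m+1)(ℓ+m+2)). -/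
noncomputable def b (l m : ℕ) : ℚ :=
  (Nat.choose (2 * (l + 1)) (l + 1) : ℚ) * (Nat.choose (2 * (m + 1)) (m + 1) : ℚ) *
    ((l + 1) * (m + 1)) / (2 * (l + m + 1) * (l + m + 2))

/-!
Reflecting `i ↦ m - i` turns the second inner sum into the first, so the left-hand side is
`(m + 1) Cat(n) - 2 ∑_{i ≤ m} ∑_{j=1}^{i} Cat(j-1) Cat(n-j)` with `n = ℓ + m + 1`. Along the
antidiagonal `ℓ + m = const`, its second difference in `m` is `-2 Cat(m+1) Cat(ℓ+1)`. Writing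
`C(2k+2, k+1) = (k+2) Cat(k+1)` and using `(k+2) Cat(k+1) = 2(2k+1) Cat(k)`, the closed form
satisfies the same recurrence, and the two agree for `m = 0, 1`.
-/

open Finset

theorem Finset.sum_range_add_reflect {M : Type*} [NonAssocSemiring M] (f : ℕ → M) (m : ℕ) :
    ∑ i ∈ range (m + 1), (f i + f (m - i)) = 2 * ∑ i ∈ range (m + 1), f i := by
  rw [sum_add_distrib, two_mul, ← sum_range_reflect f (m + 1)]
  simp only [add_tsub_cancel_right]

theorem add_two_mul_catalan_succ (n : ℕ) :
    (n + 2) * catalan (n + 1) = 2 * (2 * n + 1) * catalan n := by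
  apply Nat.eq_of_mul_eq_mul_left n.succ_pos
  calc (n + 1) * ((n + 2) * catalan (n + 1))
      = (n + 1) * (n + 1).centralBinom := by rw [← succ_mul_catalan_eq_centralBinom]
    _ = 2 * (2 * n + 1) * n.centralBinom := Nat.succ_mul_centralBinom_succ n
    _ = (n + 1) * (2 * (2 * n + 1) * catalan n) := by
      rw [← succ_mul_catalan_eq_centralBinom]; ring

theorem cast_catalan_succ (n : ℕ) :
    (catalan (n + 1) : ℚ) = 2 * (2 * n + 1) / (n + 2) * catalan n := by
  rw [div_mul_eq_mul_div, eq_div_iff (by positivity), mul_comm]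
  exact_mod_cast add_two_mul_catalan_succ n

theorem b_eq_catalan_mul_catalan (l m : ℕ) :
    b l m = (l + 1) * (l + 2) * (m + 1) * (m + 2) * catalan (l + 1) * catalan (m + 1) /
      (2 * (l + m + 1) * (l + m + 2)) := by
  have centralBinom_cast (k : ℕ) :
      ((2 * (k + 1)).choose (k + 1) : ℚ) = (k + 2) * catalan (k + 1) := by
    rw [← Nat.centralBinom_eq_two_mul_choose, ← succ_mul_catalan_eq_centralBinom]
    push_cast; ring
  rw [b, centralBinom_cast, centralBinom_cast]
  ring

theorem b_add_two (l m : ℕ) :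
    b l (m + 2) = 2 * b (l + 1) (m + 1) - b (l + 2) m - 2 * catalan (m + 1) * catalan (l + 1) := by
  -- every Catalan number descends to `catalan l` or `catalan m`, leaving a rational identity
  simp only [b_eq_catalan_mul_catalan, cast_catalan_succ]
  push_cast
  field_simp
  ring

/-- `vertexCount (ℓ + m + 1) m` is the paper's `c_{ℓ,m}`, its two inner sums merged by reflection. -/
noncomputable def vertexCount (n m : ℕ) : ℚ :=
  (m + 1) * catalan n -
    2 * ∑ i ∈ range (m + 1), ∑ j ∈ Icc 1 i, (catalan (j - 1) : ℚ) * catalan (n - j)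

theorem vertexCount_add_two (n m : ℕ) :
    vertexCount n (m + 2) =
      2 * vertexCount n (m + 1) - vertexCount n m - 2 * catalan (m + 1) * catalan (n - (m + 2)) := by
  simp only [vertexCount, sum_range_succ _ (m + 2), sum_range_succ _ (m + 1),
    sum_Icc_succ_top (show 1 ≤ m + 2 by omega)]
  push_cast
  ring

theorem vertexCount_eq_b (l m : ℕ) : vertexCount (l + m + 1) m = b l m := by
  induction m using Nat.twoStepInduction generalizing l with
  | zero =>
    simp only [vertexCount, b_eq_catalan_mul_catalan, zero_add, add_zero, range_one, sum_singleton,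
      Order.lt_one_iff, Icc_eq_empty_of_lt, sum_empty, catalan_one]
    push_cast
    field_simp
    ring
  | one =>
    simp only [vertexCount, b_eq_catalan_mul_catalan, cast_catalan_succ, Nat.reduceAdd, sum_range_succ,
      range_one, sum_singleton, Order.lt_one_iff, Icc_eq_empty_of_lt, sum_empty, Icc_self, tsub_self,
      catalan_zero, add_tsub_cancel_right, catalan_one]
    push_cast
    field_simp
    ring
  | more m ih₀ ih₁ =>
    have h₀ := ih₀ (l + 2)
    have h₁ := ih₁ (l + 1)
    rw [show l + 2 + m + 1 = l + (m + 2) + 1 by omega] at h₀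
    rw [show l + 1 + (m + 1) + 1 = l + (m + 2) + 1 by omega] at h₁
    rw [vertexCount_add_two, h₀, h₁, show l + (m + 2) + 1 - (m + 2) = l + 1 by omega, b_add_two]

theorem stmt_7 (l m : ℕ) :
    ((m + 1 : ℚ) * (catalan (l + m + 1) : ℚ) -
        ∑ i ∈ Finset.range (m + 1),
          ((∑ j ∈ Finset.Icc 1 i,
              (catalan (j - 1) : ℚ) * (catalan (l + m + 1 - j) : ℚ)) +
            ∑ j ∈ Finset.Icc 1 (m - i),
              (catalan (l + m + 1 - j) : ℚ) * (catalan (j - 1) : ℚ))) =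
      b l m := by
  simp_rw [mul_comm (catalan (l + m + 1 - _) : ℚ)]
  rw [sum_range_add_reflect (fun i => ∑ j ∈ Icc 1 i, (catalan (j - 1) : ℚ) * catalan (l + m + 1 - j)),
    ← vertexCount_eq_b, vertexCount]
end

section
/- For all ℓ ≥ 0 and m ≥ 1: ∑_{i=0}^{m} ( ∑_{j=1}^{i} Cat(j−1)·Cat(ℓ+m+1−j) + ∑_{j=1}^{m−i} Cat(ℓ+m+1−j)·Cat(j−1) ) = (m+1)·Cat(ℓ+m+1) − b_{ℓ,m}, where Cat is the Catalan number and b_{ℓ,m} = C(2(ℓ+1), ℓ+1)·C(2(m+1), m+1)·(ℓ+1)(m+1)/(2(ℓ+m+1)(ℓ+m+2)). -/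
/-!
Both sums telescope. Writing `C k` for the central binomial coefficient, the increments of the
partial Catalan convolution are hypergeometric and give the closed form
`2 ∑_{j=1}^{p} Cat(j-1) Cat(n-j) = Cat n - C p * C (n-p) * (n - 2p) / (n (n+1))`.
The two inner sums are exchanged by `i ↦ m - i`, so the left side is the sum of these closed forms
for `n = ℓ + m + 1`, and `∑_{i ≤ m} C i * C (n-i) * (n - 2i)` telescopes in turn to
`C (m+1) * C (n-m) * (m+1) * (n-m) / 2`, which is `b ℓ m` up to the factor `n (n+1)`.
-/

open Finset Nat

lemma cast_catalan_eq_centralBinom_div (n : ℕ) :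
    (catalan n : ℚ) = centralBinom n / (n + 1) := by
  rw [eq_div_iff (by positivity), mul_comm]
  exact_mod_cast succ_mul_catalan_eq_centralBinom n

lemma cast_centralBinom_succ (n : ℕ) :
    (centralBinom (n + 1) : ℚ) = 2 * (2 * n + 1) * centralBinom n / (n + 1) := by
  rw [eq_div_iff (by positivity), mul_comm]
  exact_mod_cast succ_mul_centralBinom_succ n

lemma two_mul_catalan_mul_catalan (p q : ℕ) :
    2 * (catalan p : ℚ) * catalan q =
      (centralBinom p * centralBinom (q + 1) * ((q + 1 : ℚ) - p) -
        centralBinom (p + 1) * centralBinom q * ((q : ℚ) - (p + 1))) /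
      ((p + q + 1) * (p + q + 2)) := by
  rw [cast_catalan_eq_centralBinom_div, cast_catalan_eq_centralBinom_div,
    cast_centralBinom_succ, cast_centralBinom_succ]
  field_simp
  ring

lemma centralBinom_mul_centralBinom_mul_sub (p q : ℕ) :
    centralBinom p * centralBinom (q + 1) * ((q + 1 : ℚ) - p) =
      (centralBinom (p + 1) * centralBinom (q + 1) * (p + 1) * (q + 1) -
        centralBinom p * centralBinom (q + 2) * p * (q + 2)) / 2 := by
  rw [cast_centralBinom_succ p, cast_centralBinom_succ (q + 1)]
  push_cast
  field_simp
  ring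

theorem two_mul_sum_Icc_catalan_mul_catalan {n p : ℕ} (hn : 0 < n) (hp : p ≤ n) :
    2 * ∑ j ∈ Icc 1 p, (catalan (j - 1) : ℚ) * catalan (n - j) =
      catalan n - centralBinom p * centralBinom (n - p) * ((n : ℚ) - 2 * p) / (n * (n + 1)) := by
  induction p with
  | zero =>
    have : (n : ℚ) ≠ 0 := by positivity
    rw [cast_catalan_eq_centralBinom_div]
    field_simp
    simp
  | succ p ih =>
    obtain ⟨q, rfl⟩ : ∃ q, n = p + q + 1 := ⟨n - p - 1, by omega⟩
    rw [sum_Icc_succ_top (by omega), mul_add, ih (by omega), add_tsub_cancel_right,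
      show p + q + 1 - p = q + 1 by omega, show p + q + 1 - (p + 1) = q by omega]
    push_cast
    linear_combination two_mul_catalan_mul_catalan p q

theorem sum_range_centralBinom_mul_centralBinom {n m : ℕ} (hm : m < n) :
    ∑ i ∈ range (m + 1), centralBinom i * centralBinom (n - i) * ((n : ℚ) - 2 * i) =
      centralBinom (m + 1) * centralBinom (n - m) * (m + 1) * ((n : ℚ) - m) / 2 := by
  induction m with
  | zero =>
    simp only [zero_add, range_one, sum_singleton, centralBinom_zero, tsub_zero,
      show centralBinom 1 = 2 from rfl]
    push_cast
    ring
  | succ m ih =>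
    obtain ⟨q, rfl⟩ : ∃ q, n = m + q + 2 := ⟨n - m - 2, by omega⟩
    rw [sum_range_succ, ih (by omega), show m + q + 2 - (m + 1) = q + 1 by omega,
      show m + q + 2 - m = q + 2 by omega]
    have step := centralBinom_mul_centralBinom_mul_sub (m + 1) q
    push_cast at step ⊢
    linear_combination step

theorem stmt_8_general (l m : ℕ) :
    (∑ i ∈ Finset.range (m + 1),
        ((∑ j ∈ Finset.Icc 1 i,
            (catalan (j - 1) : ℚ) * (catalan (l + m + 1 - j) : ℚ)) +
          ∑ j ∈ Finset.Icc 1 (m - i),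
            (catalan (l + m + 1 - j) : ℚ) * (catalan (j - 1) : ℚ))) =
      (m + 1 : ℚ) * (catalan (l + m + 1) : ℚ) - b l m := by
  set n := l + m + 1 with hn
  set S : ℕ → ℚ := fun i => ∑ j ∈ Icc 1 i, (catalan (j - 1) : ℚ) * catalan (n - j)
  have hreflect : ∑ i ∈ range (m + 1), S (m - i) = ∑ i ∈ range (m + 1), S i := by
    simpa using sum_range_reflect S (m + 1)
  calc _ = ∑ i ∈ range (m + 1), (S i + S (m - i)) := by
        simp_rw [S, mul_comm (catalan (n - _) : ℚ)]
    _ = ∑ i ∈ range (m + 1), 2 * S i := by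
        rw [sum_add_distrib, hreflect, ← sum_add_distrib]
        simp_rw [two_mul]
    _ = ∑ i ∈ range (m + 1), ((catalan n : ℚ) -
          centralBinom i * centralBinom (n - i) * ((n : ℚ) - 2 * i) / (n * (n + 1))) :=
        sum_congr rfl fun i hi => two_mul_sum_Icc_catalan_mul_catalan (by omega)
          (by have := mem_range.mp hi; omega)
    _ = _ := by
      have hn_cast : (n : ℚ) = l + m + 1 := by push_cast [hn]; ring
      rw [sum_sub_distrib, sum_const, card_range, ← sum_div,
        sum_range_centralBinom_mul_centralBinom (by omega), show n - m = l + 1 by omega, b,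
        ← centralBinom_eq_two_mul_choose, ← centralBinom_eq_two_mul_choose, hn_cast]
      field_simp
      ring

theorem stmt_8 (l m : ℕ) (hm : 1 ≤ m) :
    (∑ i ∈ Finset.range (m + 1),
        ((∑ j ∈ Finset.Icc 1 i,
            (catalan (j - 1) : ℚ) * (catalan (l + m + 1 - j) : ℚ)) +
          ∑ j ∈ Finset.Icc 1 (m - i),
            (catalan (l + m + 1 - j) : ℚ) * (catalan (j - 1) : ℚ))) =
      (m + 1 : ℚ) * (catalan (l + m + 1) : ℚ) - b l m :=
  stmt_8_general l m
end
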